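/- Let A be an N×M matrix, and let J, S be disjoint index sets with |J ∪ S| ≤ 2L. Suppose every eigenvalue of (1/N)A_K* A_K lies in [(1−c)², (1+c)²] for all K with |K| = 2L, where 0 < c < 1. Then the spectral norm of (1/N)A_J* A_S is at most (1+c)² − 1 = 2c + c². -/

import Mathlib

open Matrix
open scoped Matrix.Norms.L2Operator

/-!
Pad `J ∪ S` to an index set `K` of size `2L`. Since `J` and `S` are disjoint, `(1/N) A_J* A_S`
is an off-diagonal block of `G - 1`, where `G = (1/N) A_K* A_K`, so its spectral norm is at most
`‖G - 1‖`. As `G - 1` is Hermitian, its norm is the largest `|μ|` over its spectrum, and the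
hypothesis puts that spectrum in `[(1-c)² - 1, (1+c)² - 1] ⊆ [-(2c + c²), 2c + c²]`.
-/

namespace Matrix

section L2OpNorm

variable {𝕜 : Type*} [RCLike 𝕜] {l m n o : Type*} [Fintype l] [Fintype m] [Fintype n]
  [Fintype o] [DecidableEq l] [DecidableEq m] [DecidableEq n] [DecidableEq o]

theorem l2_opNorm_one_le : ‖(1 : Matrix n n 𝕜)‖ ≤ 1 := by
  rw [cstar_norm_def, map_one]
  exact ContinuousLinearMap.norm_id_le

theorem l2_opNorm_one_submatrix_le {e : m → n} (he : Function.Injective e) :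
    ‖(1 : Matrix n n 𝕜).submatrix e id‖ ≤ 1 := by
  set P := (1 : Matrix n n 𝕜).submatrix e id
  have hP : P * Pᴴ = 1 := by
    rw [conjTranspose_submatrix, conjTranspose_one, ← submatrix_one _ he]
    simpa using one_submatrix_mul e (Equiv.refl n) ((1 : Matrix n n 𝕜).submatrix id e)
  have hP2 : ‖P‖ * ‖P‖ ≤ 1 := by
    rw [← l2_opNorm_conjTranspose P, ← l2_opNorm_conjTranspose_mul_self,
      conjTranspose_conjTranspose, hP]
    exact l2_opNorm_one_le
  nlinarith [norm_nonneg P]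

theorem l2_opNorm_submatrix_le (B : Matrix m n 𝕜) {e : l → m} {f : o → n}
    (he : Function.Injective e) (hf : Function.Injective f) : ‖B.submatrix e f‖ ≤ ‖B‖ := by
  set P := (1 : Matrix m m 𝕜).submatrix e id
  set Q := (1 : Matrix n n 𝕜).submatrix f id
  have hB : B.submatrix e f = P * B * Qᴴ := by
    ext i j
    simp [P, Q, mul_apply, one_apply]
  calc ‖B.submatrix e f‖ ≤ ‖P‖ * ‖B‖ * ‖Qᴴ‖ := by
        rw [hB]
        exact (l2_opNorm_mul _ _).trans
          (mul_le_mul_of_nonneg_right (l2_opNorm_mul _ _) (norm_nonneg _))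
    _ ≤ 1 * ‖B‖ * 1 := by
        rw [l2_opNorm_conjTranspose]
        gcongr
        exacts [l2_opNorm_one_submatrix_le he, l2_opNorm_one_submatrix_le hf]
    _ = ‖B‖ := by ring

theorem IsHermitian.l2_opNorm_le_of_forall_mem_spectrum {B : Matrix n n 𝕜}
    (hB : B.IsHermitian) {r : ℝ} (hr : 0 ≤ r) (h : ∀ μ ∈ spectrum ℝ B, |μ| ≤ r) :
    ‖B‖ ≤ r := by
  rw [hB.spectral_theorem, Unitary.conjStarAlgAut_apply,
    CStarRing.norm_mul_mem_unitary _ (Unitary.star_mem hB.eigenvectorUnitary.2),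
    CStarRing.norm_mem_unitary_mul _ hB.eigenvectorUnitary.2, l2_opNorm_diagonal,
    pi_norm_le_iff_of_nonneg hr]
  intro i
  simpa using h _ (hB.eigenvalues_mem_spectrum_real i)

end L2OpNorm

theorem submatrix_smul_transpose_mul_sub_one {R m n : Type*} [Ring R] [Fintype m]
    [DecidableEq n] (A : Matrix m n R)
    {J S K : Finset n} (hJ : J ⊆ K) (hS : S ⊆ K) (hJS : Disjoint J S) (a : R) :
    (a • ((A.submatrix id (fun k : K => (k : n))).transpose *
        A.submatrix id (fun k : K => (k : n))) - 1).submatrix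
      (fun j : J => ⟨j, hJ j.2⟩) (fun s : S => ⟨s, hS s.2⟩) =
    a • ((A.submatrix id (fun j : J => (j : n))).transpose *
        A.submatrix id (fun s : S => (s : n))) := by
  ext j s
  have hjs : (⟨j, hJ j.2⟩ : K) ≠ ⟨s, hS s.2⟩ := fun h =>
    Finset.disjoint_left.mp hJS j.2 (congrArg Subtype.val h ▸ s.2)
  simp [one_apply_ne hjs, mul_apply]

end Matrix

theorem stmt8_general (N M L : ℕ) (A : Matrix (Fin N) (Fin M) ℝ) (c : ℝ)
    (hc0 : 0 < c) (h2L : 2 * L ≤ M)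
    (heig : ∀ K : Finset (Fin M), K.card = 2 * L →
      ∀ μ ∈ spectrum ℝ ((N : ℝ)⁻¹ •
          ((A.submatrix id (fun k : K => (k : Fin M))).transpose *
            A.submatrix id (fun k : K => (k : Fin M)))),
        μ ∈ Set.Icc ((1 - c) ^ 2) ((1 + c) ^ 2))
    (J S : Finset (Fin M)) (hdisj : Disjoint J S) (hcard : (J ∪ S).card ≤ 2 * L) :
    ‖(N : ℝ)⁻¹ • ((A.submatrix id (fun j : J => (j : Fin M))).transpose *
        A.submatrix id (fun s : S => (s : Fin M)))‖ ≤ 2 * c + c ^ 2 := by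
  obtain ⟨K, hJSK, -, hK⟩ := Finset.exists_subsuperset_card_eq
    (Finset.subset_univ (J ∪ S)) hcard (by simpa using h2L)
  set AK := A.submatrix id (fun k : K => (k : Fin M))
  have hherm : ((N : ℝ)⁻¹ • (AKᵀ * AK) - 1).IsHermitian := by
    refine (IsHermitian.smul ?_ (IsSelfAdjoint.all _)).sub isHermitian_one
    simpa using isHermitian_conjTranspose_mul_self AK
  have hspec : ∀ μ ∈ spectrum ℝ ((N : ℝ)⁻¹ • (AKᵀ * AK) - 1), |μ| ≤ 2 * c + c ^ 2 := by
    intro μ hμ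
    obtain ⟨hlo, hhi⟩ := heig K hK (μ + 1) <| spectrum.add_mem_iff.mpr <| by
      rwa [map_one, neg_add_eq_sub]
    rw [abs_le]
    constructor <;> nlinarith
  rw [← submatrix_smul_transpose_mul_sub_one A (Finset.union_subset_left hJSK)
    (Finset.union_subset_right hJSK) hdisj]
  exact (l2_opNorm_submatrix_le _ (fun _ _ h => by simpa using h)
    (fun _ _ h => by simpa using h)).trans
    (hherm.l2_opNorm_le_of_forall_mem_spectrum (by positivity) hspec)

/-- If every eigenvalue of `(1/N) A_K* A_K` lies in `[(1−c)², (1+c)²]` for all `K`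
with `|K| = 2L` (`0 < c < 1`), then for disjoint `J, S` with `|J ∪ S| ≤ 2L` the
spectral norm of `(1/N) A_J* A_S` is at most `(1+c)² − 1 = 2c + c²`. -/
theorem stmt8 (N M L : ℕ) (A : Matrix (Fin N) (Fin M) ℝ) (c : ℝ)
    (hc0 : 0 < c) (hc1 : c < 1) (h2L : 2 * L ≤ M)
    (heig : ∀ K : Finset (Fin M), K.card = 2 * L →
      ∀ μ ∈ spectrum ℝ ((N : ℝ)⁻¹ •
          ((A.submatrix id (fun k : K => (k : Fin M))).transpose *
            A.submatrix id (fun k : K => (k : Fin M)))),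
        μ ∈ Set.Icc ((1 - c) ^ 2) ((1 + c) ^ 2))
    (J S : Finset (Fin M)) (hdisj : Disjoint J S) (hcard : (J ∪ S).card ≤ 2 * L) :
    ‖(N : ℝ)⁻¹ • ((A.submatrix id (fun j : J => (j : Fin M))).transpose *
        A.submatrix id (fun s : S => (s : Fin M)))‖ ≤ 2 * c + c ^ 2 :=
  stmt8_general N M L A c hc0 h2L heig J S hdisj hcard
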